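/- Let g ≥ 4 and k be integers with 2 ≤ k ≤ g-2, and let δ_2 ≤ δ_3 ≤ ... ≤ δ_g be a nondecreasing sequence of positive real numbers with product δ = δ_2·δ_3···δ_g. If δ ≥ ((g-1)!/(k-1)!)^{g(g-1)/k} / (g!)^{(g-1)(g-k)/k}, then (g!·δ)^{(g-k)/g} ≥ C(g-1, g-k) · (g-k)! · (δ_2·δ_3···δ_{g-k}). -/

import Mathlib

/-!
Let `Q = δ_2 ⋯ δ_{g-k}` and `D = δ_2 ⋯ δ_g`. Since the `δ_i` increase, the geometric mean of the
first `g - k - 1` of them is at most that of all `g - 1`, i.e. `Q ≤ D ^ ((g-k-1)/(g-1))`. The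
hypothesis, raised to the power `k / (g(g-1))`, reads `(g-1)!/(k-1)! ≤ (g!)^((g-k)/g) · D ^ (k/(g(g-1)))`.
Multiplying the two bounds gives the claim, because `(g-k-1)/(g-1) + k/(g(g-1)) = (g-k)/g` and
`C(g-1, g-k) · (g-k)! = (g-1)!/(k-1)!`.
-/

open Real

open Finset in
theorem prod_Ioc_pow_le_prod_Ioc_pow {R : Type*} [CommSemiring R] [PartialOrder R]
    [IsOrderedRing R] {x : ℕ → R} {a b c : ℕ} (hab : a ≤ b) (hbc : b ≤ c)
    (hx : ∀ i ∈ Set.Ioc a c, 0 ≤ x i) (hmono : MonotoneOn x (Set.Ioc a c)) :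
    (∏ i ∈ Ioc a b, x i) ^ (c - b) ≤ (∏ i ∈ Ioc b c, x i) ^ (b - a) := by
  rcases hab.eq_or_lt with rfl | hab
  · simp
  -- `x b` separates the two blocks of factors.
  have hb : b ∈ Set.Ioc a c := ⟨hab, hbc⟩
  have hlow : ∀ i ∈ Ioc a b, i ∈ Set.Ioc a c := fun i hi =>
    ⟨(mem_Ioc.1 hi).1, (mem_Ioc.1 hi).2.trans hbc⟩
  have hhigh : ∀ i ∈ Ioc b c, i ∈ Set.Ioc a c := fun i hi =>
    ⟨hab.trans (mem_Ioc.1 hi).1, (mem_Ioc.1 hi).2⟩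
  calc (∏ i ∈ Ioc a b, x i) ^ (c - b)
      ≤ (x b ^ (b - a)) ^ (c - b) := by
        refine pow_le_pow_left₀ (prod_nonneg fun i hi => hx i (hlow i hi)) ?_ _
        rw [← Nat.card_Ioc a b, ← prod_const]
        exact prod_le_prod (fun i hi => hx i (hlow i hi))
          fun i hi => hmono (hlow i hi) hb (mem_Ioc.1 hi).2
    _ = (x b ^ (c - b)) ^ (b - a) := by rw [← pow_mul, ← pow_mul, mul_comm]
    _ ≤ (∏ i ∈ Ioc b c, x i) ^ (b - a) := by
        refine pow_le_pow_left₀ (pow_nonneg (hx b hb) _) ?_ _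
        rw [← Nat.card_Ioc b c, ← prod_const]
        exact prod_le_prod (fun _ _ => hx b hb)
          fun i hi => hmono hb (hhigh i hi) (mem_Ioc.1 hi).1.le

open Finset in
theorem prod_Ioc_pow_le_prod_Ioc_pow_of_le {R : Type*} [CommSemiring R] [PartialOrder R]
    [IsOrderedRing R] {x : ℕ → R} {a b c : ℕ} (hab : a ≤ b) (hbc : b ≤ c)
    (hx : ∀ i ∈ Set.Ioc a c, 0 ≤ x i) (hmono : MonotoneOn x (Set.Ioc a c)) :
    (∏ i ∈ Ioc a b, x i) ^ (c - a) ≤ (∏ i ∈ Ioc a c, x i) ^ (b - a) := by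
  have hP : 0 ≤ ∏ i ∈ Ioc a b, x i := prod_nonneg fun i hi =>
    hx i ⟨(mem_Ioc.1 hi).1, (mem_Ioc.1 hi).2.trans hbc⟩
  calc (∏ i ∈ Ioc a b, x i) ^ (c - a)
      = (∏ i ∈ Ioc a b, x i) ^ (b - a) * (∏ i ∈ Ioc a b, x i) ^ (c - b) := by
        rw [← pow_add]; congr 1; omega
    _ ≤ (∏ i ∈ Ioc a b, x i) ^ (b - a) * (∏ i ∈ Ioc b c, x i) ^ (b - a) :=
        mul_le_mul_of_nonneg_left (prod_Ioc_pow_le_prod_Ioc_pow hab hbc hx hmono)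
          (pow_nonneg hP _)
    _ = (∏ i ∈ Ioc a c, x i) ^ (b - a) := by
        rw [← mul_pow, prod_Ioc_consecutive x hab hbc]

theorem Real.le_rpow_div_of_pow_le_pow {x y : ℝ} {m n : ℕ} (hx : 0 ≤ x) (hy : 0 ≤ y)
    (hn : n ≠ 0) (h : x ^ n ≤ y ^ m) : x ≤ y ^ ((m : ℝ) / n) := by
  calc x = (x ^ n) ^ (n⁻¹ : ℝ) := (pow_rpow_inv_natCast hx hn).symm
    _ ≤ (y ^ m) ^ (n⁻¹ : ℝ) := rpow_le_rpow (by positivity) h (by positivity)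
    _ = y ^ ((m : ℝ) / n) := by rw [← rpow_natCast, ← rpow_mul hy, div_eq_mul_inv]

theorem Real.mul_le_rpow_of_div_rpow_le {A C D Q p q v : ℝ} (hA : 0 < A) (hC : 0 ≤ C)
    (hD : 0 < D) (hQ : 0 ≤ Q) (hp : 0 < p) (hCD : C ^ p / A ^ q ≤ D) (hQD : Q ≤ D ^ v)
    (hpv : p⁻¹ + v = q / p) : C * Q ≤ (A * D) ^ (q / p) := by
  have hC' : C ≤ D ^ p⁻¹ * A ^ (q / p) := by
    have h := rpow_le_rpow (by positivity) hCD (inv_nonneg.2 hp.le)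
    rwa [div_rpow (by positivity) (by positivity), ← rpow_mul hC, ← rpow_mul hA.le,
      mul_inv_cancel₀ hp.ne', rpow_one, ← div_eq_mul_inv, div_le_iff₀ (by positivity)] at h
  calc C * Q ≤ D ^ p⁻¹ * A ^ (q / p) * D ^ v := mul_le_mul hC' hQD hQ (by positivity)
    _ = (A * D) ^ (q / p) := by
        rw [mul_right_comm, ← rpow_add hD, hpv, mul_rpow hA.le hD.le, mul_comm]

theorem Nat.cast_choose_mul_factorial {K : Type*} [DivisionRing K] [CharZero K] {n r : ℕ}
    (h : r ≤ n) : (n.choose r : K) * r.factorial = n.factorial / (n - r).factorial := by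
  rw [eq_div_iff (Nat.cast_ne_zero.2 (Nat.factorial_ne_zero _))]
  exact_mod_cast Nat.choose_mul_factorial_mul_factorial h

theorem hodge_inequality_for_types_general (g k : ℕ)
    (hk : 2 ≤ k) (hkg : k + 2 ≤ g)
    (δ : ℕ → ℝ) (hpos : ∀ i, 2 ≤ i → i ≤ g → 0 < δ i)
    (hmono : ∀ i j, 2 ≤ i → i ≤ j → j ≤ g → δ i ≤ δ j)
    (hδ : (∏ i ∈ Finset.Icc 2 g, δ i) ≥
        (((g - 1).factorial : ℝ) / ((k - 1).factorial : ℝ)) ^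
          (((g : ℝ) * ((g : ℝ) - 1)) / (k : ℝ)) /
        ((g.factorial : ℝ)) ^ ((((g : ℝ) - 1) * ((g : ℝ) - (k : ℝ))) / (k : ℝ))) :
    ((g.factorial : ℝ) * ∏ i ∈ Finset.Icc 2 g, δ i) ^ (((g : ℝ) - (k : ℝ)) / (g : ℝ)) ≥
      ((g - 1).choose (g - k) : ℝ) * ((g - k).factorial : ℝ) *
        ∏ i ∈ Finset.Icc 2 (g - k), δ i := by
  have hIcc (n : ℕ) : Finset.Icc 2 n = Finset.Ioc 1 n := Finset.Icc_add_one_left_eq_Ioc 1 n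
  have hpos' : ∀ i ∈ Set.Ioc 1 g, 0 < δ i := fun i hi => hpos i hi.1 hi.2
  have hD : 0 < ∏ i ∈ Finset.Icc 2 g, δ i := Finset.prod_pos fun i hi =>
    hpos' i (by simpa [hIcc] using hi)
  have hQ : 0 ≤ ∏ i ∈ Finset.Icc 2 (g - k), δ i := Finset.prod_nonneg fun i hi =>
    (hpos i (Finset.mem_Icc.1 hi).1 ((Finset.mem_Icc.1 hi).2.trans (Nat.sub_le g k))).le
  have hQD : ∏ i ∈ Finset.Icc 2 (g - k), δ i ≤
      (∏ i ∈ Finset.Icc 2 g, δ i) ^ (((g - k - 1 : ℕ) : ℝ) / (g - 1 : ℕ)) := by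
    refine le_rpow_div_of_pow_le_pow hQ hD.le (by omega) ?_
    simp only [hIcc]
    exact prod_Ioc_pow_le_prod_Ioc_pow_of_le (by omega) (Nat.sub_le g k)
      (fun i hi => (hpos' i hi).le) fun i hi j hj hij => hmono i j hi.1 hij hj.2
  have hg : (1 : ℝ) < g := by exact_mod_cast (by omega : 1 < g)
  have hg1 : (g : ℝ) - 1 ≠ 0 := (sub_pos.2 hg).ne'
  have hk0 : (0 : ℝ) < k := by exact_mod_cast (by omega : 0 < k)
  have hexp : ((g : ℝ) - 1) * (g - k) / k / (g * (g - 1) / k) = (g - k) / g := by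
    field_simp
  rw [ge_iff_le, Nat.cast_choose_mul_factorial (by omega), show g - 1 - (g - k) = k - 1 by omega,
    ← hexp]
  refine mul_le_rpow_of_div_rpow_le (by positivity) (by positivity) hD hQ
    (div_pos (mul_pos (by linarith) (by linarith)) hk0) hδ hQD ?_
  push_cast [show k ≤ g by omega, show 1 ≤ g - k by omega, show 1 ≤ g by omega]
  field_simp
  ring

/-- The key numerical inequality in the proof of Theorem 3.1. -/
theorem hodge_inequality_for_types (g k : ℕ) (hg : 4 ≤ g)
    (hk : 2 ≤ k) (hkg : k + 2 ≤ g)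
    (δ : ℕ → ℝ) (hpos : ∀ i, 2 ≤ i → i ≤ g → 0 < δ i)
    (hmono : ∀ i j, 2 ≤ i → i ≤ j → j ≤ g → δ i ≤ δ j)
    (hδ : (∏ i ∈ Finset.Icc 2 g, δ i) ≥
        (((g - 1).factorial : ℝ) / ((k - 1).factorial : ℝ)) ^
          (((g : ℝ) * ((g : ℝ) - 1)) / (k : ℝ)) /
        ((g.factorial : ℝ)) ^ ((((g : ℝ) - 1) * ((g : ℝ) - (k : ℝ))) / (k : ℝ))) :
    ((g.factorial : ℝ) * ∏ i ∈ Finset.Icc 2 g, δ i) ^ (((g : ℝ) - (k : ℝ)) / (g : ℝ)) ≥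
      ((g - 1).choose (g - k) : ℝ) * ((g - k).factorial : ℝ) *
        ∏ i ∈ Finset.Icc 2 (g - k), δ i :=
  hodge_inequality_for_types_general g k hk hkg δ hpos hmono hδ
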